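/- On ℝ⁶ with coordinates (x₁,...,x₆), the vector fields R₁ = ∂₂, R₂ = x₁∂₂ + ∂₃, R₃ = (x₁²/2)∂₂ + x₁∂₃ + ∂₄, R₄ = (x₁³/6)∂₂ + (x₁²/2)∂₃ + x₁∂₄ + ∂₅ pairwise commute, are Lie symmetries of the distribution D = ⟨∂₆, x₆∂₅ + x₅∂₄ + x₄∂₃ + x₃∂₂ + ∂₁⟩, and together with D they span Tℝ⁶ at every point, with D ∩ ⟨R₁,...,R₄⟩ = 0. -/

import Mathlib

noncomputable def lieBracket {n : ℕ} (X Y : (Fin n → ℝ) → (Fin n → ℝ)) :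
    (Fin n → ℝ) → (Fin n → ℝ) :=
  fun p => fderiv ℝ Y p (X p) - fderiv ℝ X p (Y p)

/- The class-4 Goursat distribution `D = ⟨∂₆, x₆∂₅ + x₅∂₄ + x₄∂₃ + x₃∂₂ + ∂₁⟩` on `ℝ⁶`. -/
noncomputable def X1 : (Fin 6 → ℝ) → (Fin 6 → ℝ) := fun _ => ![0, 0, 0, 0, 0, 1]
noncomputable def X2 : (Fin 6 → ℝ) → (Fin 6 → ℝ) := fun p => ![1, p 2, p 3, p 4, p 5, 0]

noncomputable def D (p : Fin 6 → ℝ) : Submodule ℝ (Fin 6 → ℝ) :=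
  Submodule.span ℝ {X1 p, X2 p}

def IsLieSymmetry (S : (Fin 6 → ℝ) → (Fin 6 → ℝ)) : Prop :=
  ∀ X : (Fin 6 → ℝ) → (Fin 6 → ℝ), ContDiff ℝ (⊤ : ℕ∞) X → (∀ p, X p ∈ D p) →
    ∀ p, lieBracket S X p ∈ D p

noncomputable def R1 : (Fin 6 → ℝ) → (Fin 6 → ℝ) := fun _ => ![0, 1, 0, 0, 0, 0]
noncomputable def R2 : (Fin 6 → ℝ) → (Fin 6 → ℝ) := fun p => ![0, p 0, 1, 0, 0, 0]
noncomputable def R3 : (Fin 6 → ℝ) → (Fin 6 → ℝ) := fun p => ![0, (p 0)^2 / 2, p 0, 1, 0, 0]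
noncomputable def R4 : (Fin 6 → ℝ) → (Fin 6 → ℝ) :=
  fun p => ![0, (p 0)^3 / 6, (p 0)^2 / 2, p 0, 1, 0]

/-! ### Auxiliary machinery -/

@[simp] lemma vec6_0 (a b c d e f : ℝ) : (![a,b,c,d,e,f] : Fin 6 → ℝ) 0 = a := rfl
@[simp] lemma vec6_1 (a b c d e f : ℝ) : (![a,b,c,d,e,f] : Fin 6 → ℝ) 1 = b := rfl
@[simp] lemma vec6_2 (a b c d e f : ℝ) : (![a,b,c,d,e,f] : Fin 6 → ℝ) 2 = c := rfl
@[simp] lemma vec6_3 (a b c d e f : ℝ) : (![a,b,c,d,e,f] : Fin 6 → ℝ) 3 = d := rfl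
@[simp] lemma vec6_4 (a b c d e f : ℝ) : (![a,b,c,d,e,f] : Fin 6 → ℝ) 4 = e := rfl
@[simp] lemma vec6_5 (a b c d e f : ℝ) : (![a,b,c,d,e,f] : Fin 6 → ℝ) 5 = f := rfl

@[simp] lemma fval0 : ((0 : Fin 6) : ℕ) = 0 := rfl
@[simp] lemma fval1 : ((1 : Fin 6) : ℕ) = 1 := rfl
@[simp] lemma fval2 : ((2 : Fin 6) : ℕ) = 2 := rfl
@[simp] lemma fval3 : ((3 : Fin 6) : ℕ) = 3 := rfl
@[simp] lemma fval4 : ((4 : Fin 6) : ℕ) = 4 := rfl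
@[simp] lemma fval5 : ((5 : Fin 6) : ℕ) = 5 := rfl

noncomputable def pr : (Fin 6 → ℝ) →L[ℝ] ℝ := ContinuousLinearMap.proj 0

noncomputable def dd (c : Fin 6 → ℝ) : (Fin 6 → ℝ) →L[ℝ] (Fin 6 → ℝ) :=
  ContinuousLinearMap.pi (fun i => c i • pr)

lemma dd_apply (c : Fin 6 → ℝ) (v : Fin 6 → ℝ) (i : Fin 6) : dd c v i = c i * v 0 := by
  simp [dd, pr]

lemma key_proj (c : Fin 6 → ℝ) (i : Fin 6) :
    (ContinuousLinearMap.proj i).comp (dd c) = c i • pr := by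
  ext v; simp [dd, pr]

lemma hx0 (p : Fin 6 → ℝ) : HasFDerivAt (fun q : Fin 6 → ℝ => q 0) pr p :=
  hasFDerivAt_apply (𝕜 := ℝ) 0 p

lemma hx0sq (p : Fin 6 → ℝ) :
    HasFDerivAt (fun q : Fin 6 → ℝ => (q 0)^2/2) ((p 0) • pr) p := by
  have h2 := ((hx0 p).mul (hx0 p)).const_mul (1/2 : ℝ)
  have e : (fun q : Fin 6 → ℝ => (q 0)^2/2) =
      fun y => 1/2 * ((fun q : Fin 6 → ℝ => q 0) * fun q : Fin 6 → ℝ => q 0) y := by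
    funext q; simp only [Pi.mul_apply]; ring
  rw [e]; refine h2.congr_fderiv ?_
  · ext v; simp [pr]; ring

lemma hx0cube (p : Fin 6 → ℝ) :
    HasFDerivAt (fun q : Fin 6 → ℝ => (q 0)^3/6) (((p 0)^2/2) • pr) p := by
  have h2 := (((hx0 p).mul (hx0 p)).mul (hx0 p)).const_mul (1/6 : ℝ)
  have e : (fun q : Fin 6 → ℝ => (q 0)^3/6) =
      fun y => 1/6 * (((fun q : Fin 6 → ℝ => q 0) * fun q : Fin 6 → ℝ => q 0) *
        fun q : Fin 6 → ℝ => q 0) y := by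
    funext q; simp only [Pi.mul_apply]; ring
  rw [e]; refine h2.congr_fderiv ?_
  · ext v; simp [pr]; ring

lemma hdR1 (p : Fin 6 → ℝ) : HasFDerivAt R1 (dd 0) p := by
  have h : dd (0 : Fin 6 → ℝ) = 0 := by ext v i; simp [dd_apply]
  rw [h]
  exact hasFDerivAt_const _ _

lemma hdR2 (p : Fin 6 → ℝ) : HasFDerivAt R2 (dd ![0, 1, 0, 0, 0, 0]) p := by
  apply hasFDerivAt_pi''
  intro i
  rw [key_proj]
  fin_cases i <;> simp [R2] <;>
    first
    | exact hasFDerivAt_const _ _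
    | exact hx0 p
    | exact hx0sq p
    | exact hx0cube p

lemma hdR3 (p : Fin 6 → ℝ) : HasFDerivAt R3 (dd ![0, p 0, 1, 0, 0, 0]) p := by
  apply hasFDerivAt_pi''
  intro i
  rw [key_proj]
  fin_cases i <;> simp [R3] <;>
    first
    | exact hasFDerivAt_const _ _
    | exact hx0 p
    | exact hx0sq p
    | exact hx0cube p

lemma hdR4 (p : Fin 6 → ℝ) : HasFDerivAt R4 (dd ![0, (p 0)^2/2, p 0, 1, 0, 0]) p := by
  apply hasFDerivAt_pi''
  intro i
  rw [key_proj]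
  fin_cases i <;> simp [R4] <;>
    first
    | exact hasFDerivAt_const _ _
    | exact hx0 p
    | exact hx0sq p
    | exact hx0cube p

/-- The constraint submodule characterizing `D p`. -/
def K (p : Fin 6 → ℝ) : Submodule ℝ (Fin 6 → ℝ) where
  carrier := {v | v 1 = v 0 * p 2 ∧ v 2 = v 0 * p 3 ∧ v 3 = v 0 * p 4 ∧ v 4 = v 0 * p 5}
  add_mem' := by
    rintro a b ⟨a1, a2, a3, a4⟩ ⟨b1, b2, b3, b4⟩
    refine ⟨?_, ?_, ?_, ?_⟩ <;> simp only [Pi.add_apply, a1, a2, a3, a4, b1, b2, b3, b4] <;> ring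
  zero_mem' := by simp
  smul_mem' := by
    rintro c a ⟨a1, a2, a3, a4⟩
    refine ⟨?_, ?_, ?_, ?_⟩ <;> simp only [Pi.smul_apply, smul_eq_mul, a1, a2, a3, a4] <;> ring

lemma mem_D_iff {p v : Fin 6 → ℝ} :
    v ∈ D p ↔ (v 1 = v 0 * p 2 ∧ v 2 = v 0 * p 3 ∧ v 3 = v 0 * p 4 ∧ v 4 = v 0 * p 5) := by
  constructor
  · intro hv
    have hle : D p ≤ K p := by
      apply Submodule.span_le.mpr
      rintro x (rfl | rfl)
      · refine ⟨?_, ?_, ?_, ?_⟩ <;> simp [X1]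
      · refine ⟨?_, ?_, ?_, ?_⟩ <;> simp [X2]
    exact hle hv
  · rintro ⟨h1, h2, h3, h4⟩
    have hv : v = v 5 • X1 p + v 0 • X2 p := by
      funext i
      fin_cases i <;> simp [X1, X2, h1, h2, h3, h4, mul_comm]
    rw [hv]
    exact Submodule.add_mem _
      (Submodule.smul_mem _ _ (Submodule.subset_span (Set.mem_insert _ _)))
      (Submodule.smul_mem _ _ (Submodule.subset_span (Set.mem_insert_of_mem _ rfl)))

lemma brack_zero {S T cS cT : (Fin 6 → ℝ) → (Fin 6 → ℝ)}
    (hS : ∀ p, HasFDerivAt S (dd (cS p)) p) (hT : ∀ p, HasFDerivAt T (dd (cT p)) p)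
    (hS0 : ∀ p, S p 0 = 0) (hT0 : ∀ p, T p 0 = 0) :
    lieBracket S T = 0 := by
  funext p i
  simp only [lieBracket, (hS p).fderiv, (hT p).fderiv, Pi.sub_apply, Pi.zero_apply,
    dd_apply, hS0, hT0, mul_zero, sub_zero]

lemma symm_aux {S c : (Fin 6 → ℝ) → (Fin 6 → ℝ)}
    (hS : ∀ p, HasFDerivAt S (dd (c p)) p)
    (h0 : ∀ p, c p 0 = 0)
    (h1 : ∀ p, S p 2 = c p 1) (h2 : ∀ p, S p 3 = c p 2)
    (h3 : ∀ p, S p 4 = c p 3) (h4 : ∀ p, S p 5 = c p 4) :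
    IsLieSymmetry S := by
  intro X hX hXD p
  have hXd : Differentiable ℝ X := hX.differentiable (by simp)
  have hdi : ∀ (i : Fin 6) (q : Fin 6 → ℝ), DifferentiableAt ℝ (fun r => X r i) q :=
    fun i q => ((ContinuousLinearMap.proj i : (Fin 6 → ℝ) →L[ℝ] ℝ).differentiableAt).comp q
      (hXd q)
  have hpi : fderiv ℝ X p = ContinuousLinearMap.pi (fun i => fderiv ℝ (fun q => X q i) p) :=
    fderiv_pi (fun i => hdi i p)
  have hc : ∀ (i j : Fin 6), (∀ q : Fin 6 → ℝ, X q i = X q 0 * q j) →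
      fderiv ℝ (fun q => X q i) p = X p 0 • (ContinuousLinearMap.proj j :
        (Fin 6 → ℝ) →L[ℝ] ℝ) + p j • fderiv ℝ (fun q => X q 0) p := by
    intro i j hij
    have heq : (fun q : Fin 6 → ℝ => X q i) = fun q => X q 0 * q j := funext hij
    have hmul : HasFDerivAt (fun q : Fin 6 → ℝ => X q 0 * q j)
        (X p 0 • (ContinuousLinearMap.proj j : (Fin 6 → ℝ) →L[ℝ] ℝ) +
          p j • fderiv ℝ (fun q => X q 0) p) p :=
      (hdi 0 p).hasFDerivAt.mul (hasFDerivAt_apply (𝕜 := ℝ) j p)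
    rw [heq]
    exact hmul.fderiv
  have c1 : ∀ q : Fin 6 → ℝ, X q 1 = X q 0 * q 2 := fun q => (mem_D_iff.mp (hXD q)).1
  have c2 : ∀ q : Fin 6 → ℝ, X q 2 = X q 0 * q 3 := fun q => (mem_D_iff.mp (hXD q)).2.1
  have c3 : ∀ q : Fin 6 → ℝ, X q 3 = X q 0 * q 4 := fun q => (mem_D_iff.mp (hXD q)).2.2.1
  have c4 : ∀ q : Fin 6 → ℝ, X q 4 = X q 0 * q 5 := fun q => (mem_D_iff.mp (hXD q)).2.2.2
  have hcomp : ∀ i : Fin 6, lieBracket S X p i =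
      fderiv ℝ (fun q => X q i) p (S p) - c p i * X p 0 := by
    intro i
    simp only [lieBracket, Pi.sub_apply, (hS p).fderiv, dd_apply, hpi,
      ContinuousLinearMap.pi_apply]
  rw [mem_D_iff]
  have e0 : lieBracket S X p 0 = fderiv ℝ (fun q => X q 0) p (S p) := by
    rw [hcomp 0, h0 p]; ring
  have e1 : lieBracket S X p 1 =
      X p 0 * S p 2 + p 2 * fderiv ℝ (fun q => X q 0) p (S p) - c p 1 * X p 0 := by
    rw [hcomp 1, hc 1 2 c1]; simp; try ring
  have e2 : lieBracket S X p 2 =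
      X p 0 * S p 3 + p 3 * fderiv ℝ (fun q => X q 0) p (S p) - c p 2 * X p 0 := by
    rw [hcomp 2, hc 2 3 c2]; simp; try ring
  have e3 : lieBracket S X p 3 =
      X p 0 * S p 4 + p 4 * fderiv ℝ (fun q => X q 0) p (S p) - c p 3 * X p 0 := by
    rw [hcomp 3, hc 3 4 c3]; simp; try ring
  have e4 : lieBracket S X p 4 =
      X p 0 * S p 5 + p 5 * fderiv ℝ (fun q => X q 0) p (S p) - c p 4 * X p 0 := by
    rw [hcomp 4, hc 4 5 c4]; simp; try ring
  refine ⟨?_, ?_, ?_, ?_⟩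
  · rw [e0, e1, h1 p]; ring
  · rw [e0, e2, h2 p]; ring
  · rw [e0, e3, h3 p]; ring
  · rw [e0, e4, h4 p]; ring

noncomputable def ee (i : Fin 6) : Fin 6 → ℝ := Pi.single i 1

def K05 : Submodule ℝ (Fin 6 → ℝ) where
  carrier := {v | v 0 = 0 ∧ v 5 = 0}
  add_mem' := by rintro a b ⟨a0, a5⟩ ⟨b0, b5⟩; exact ⟨by simp [a0, b0], by simp [a5, b5]⟩
  zero_mem' := ⟨rfl, rfl⟩
  smul_mem' := by rintro c a ⟨a0, a5⟩; exact ⟨by simp [a0], by simp [a5]⟩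

theorem goursat_class4_four_contact :
    (∀ i j : Fin 4, lieBracket (![R1, R2, R3, R4] i) (![R1, R2, R3, R4] j) = 0) ∧
    IsLieSymmetry R1 ∧ IsLieSymmetry R2 ∧ IsLieSymmetry R3 ∧ IsLieSymmetry R4 ∧
    ∀ p : Fin 6 → ℝ,
      D p ⊔ Submodule.span ℝ {R1 p, R2 p, R3 p, R4 p} = ⊤ ∧
      D p ⊓ Submodule.span ℝ {R1 p, R2 p, R3 p, R4 p} = ⊥ := by
  have hR10 : ∀ p : Fin 6 → ℝ, R1 p 0 = 0 := fun p => rfl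
  have hR20 : ∀ p : Fin 6 → ℝ, R2 p 0 = 0 := fun p => rfl
  have hR30 : ∀ p : Fin 6 → ℝ, R3 p 0 = 0 := fun p => rfl
  have hR40 : ∀ p : Fin 6 → ℝ, R4 p 0 = 0 := fun p => rfl
  refine ⟨?_, ?_, ?_, ?_, ?_, ?_⟩
  · intro i j
    fin_cases i <;> fin_cases j <;>
      first
      | exact brack_zero hdR1 hdR1 hR10 hR10
      | exact brack_zero hdR1 hdR2 hR10 hR20
      | exact brack_zero hdR1 hdR3 hR10 hR30
      | exact brack_zero hdR1 hdR4 hR10 hR40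
      | exact brack_zero hdR2 hdR1 hR20 hR10
      | exact brack_zero hdR2 hdR2 hR20 hR20
      | exact brack_zero hdR2 hdR3 hR20 hR30
      | exact brack_zero hdR2 hdR4 hR20 hR40
      | exact brack_zero hdR3 hdR1 hR30 hR10
      | exact brack_zero hdR3 hdR2 hR30 hR20
      | exact brack_zero hdR3 hdR3 hR30 hR30
      | exact brack_zero hdR3 hdR4 hR30 hR40
      | exact brack_zero hdR4 hdR1 hR40 hR10
      | exact brack_zero hdR4 hdR2 hR40 hR20
      | exact brack_zero hdR4 hdR3 hR40 hR30
      | exact brack_zero hdR4 hdR4 hR40 hR40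
  · exact symm_aux hdR1 (fun p => rfl) (fun p => rfl) (fun p => rfl) (fun p => rfl) (fun p => rfl)
  · exact symm_aux hdR2 (fun p => rfl) (fun p => rfl) (fun p => rfl) (fun p => rfl) (fun p => rfl)
  · exact symm_aux hdR3 (fun p => rfl) (fun p => rfl) (fun p => rfl) (fun p => rfl) (fun p => rfl)
  · exact symm_aux hdR4 (fun p => rfl) (fun p => rfl) (fun p => rfl) (fun p => rfl) (fun p => rfl)
  · intro p
    set M := D p ⊔ Submodule.span ℝ {R1 p, R2 p, R3 p, R4 p} with hM
    have hX1m : X1 p ∈ M := Submodule.mem_sup_left (Submodule.subset_span (by simp))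
    have hX2m : X2 p ∈ M := Submodule.mem_sup_left (Submodule.subset_span (by simp))
    have hR1m : R1 p ∈ M := Submodule.mem_sup_right (Submodule.subset_span (by simp))
    have hR2m : R2 p ∈ M := Submodule.mem_sup_right (Submodule.subset_span (by simp))
    have hR3m : R3 p ∈ M := Submodule.mem_sup_right (Submodule.subset_span (by simp))
    have hR4m : R4 p ∈ M := Submodule.mem_sup_right (Submodule.subset_span (by simp))
    have he1 : ee 1 ∈ M := by
      have h : ee 1 = R1 p := by
        funext j; fin_cases j <;> simp [ee, R1, Pi.single_apply, Pi.sub_apply, Pi.smul_apply, smul_eq_mul, Matrix.vecHead, Matrix.vecTail, Fin.ext_iff, Fin.val_succ]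
      rw [h]; exact hR1m
    have he2 : ee 2 ∈ M := by
      have h : ee 2 = R2 p - p 0 • ee 1 := by
        funext j; fin_cases j <;> simp [ee, R2, Pi.single_apply, Pi.sub_apply, Pi.smul_apply, smul_eq_mul, Matrix.vecHead, Matrix.vecTail, Fin.ext_iff, Fin.val_succ]
      rw [h]; exact M.sub_mem hR2m (M.smul_mem _ he1)
    have he3 : ee 3 ∈ M := by
      have h : ee 3 = R3 p - p 0 • ee 2 - ((p 0)^2/2) • ee 1 := by
        funext j; fin_cases j <;> (simp [ee, R3, Pi.single_apply, Pi.sub_apply, Pi.smul_apply, smul_eq_mul, Matrix.vecHead, Matrix.vecTail, Fin.ext_iff, Fin.val_succ]; try ring)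
      rw [h]; exact M.sub_mem (M.sub_mem hR3m (M.smul_mem _ he2)) (M.smul_mem _ he1)
    have he4 : ee 4 ∈ M := by
      have h : ee 4 = R4 p - p 0 • ee 3 - ((p 0)^2/2) • ee 2 - ((p 0)^3/6) • ee 1 := by
        funext j; fin_cases j <;> (simp [ee, R4, Pi.single_apply, Pi.sub_apply, Pi.smul_apply, smul_eq_mul, Matrix.vecHead, Matrix.vecTail, Fin.ext_iff, Fin.val_succ]; try ring)
      rw [h]
      exact M.sub_mem (M.sub_mem (M.sub_mem hR4m (M.smul_mem _ he3)) (M.smul_mem _ he2))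
        (M.smul_mem _ he1)
    have he5 : ee 5 ∈ M := by
      have h : ee 5 = X1 p := by
        funext j; fin_cases j <;> simp [ee, X1, Pi.single_apply, Pi.sub_apply, Pi.smul_apply, smul_eq_mul, Matrix.vecHead, Matrix.vecTail, Fin.ext_iff, Fin.val_succ]
      rw [h]; exact hX1m
    have he0 : ee 0 ∈ M := by
      have h : ee 0 = X2 p - p 2 • ee 1 - p 3 • ee 2 - p 4 • ee 3 - p 5 • ee 4 := by
        funext j; fin_cases j <;> simp [ee, X2, Pi.single_apply, Pi.sub_apply, Pi.smul_apply, smul_eq_mul, Matrix.vecHead, Matrix.vecTail, Fin.ext_iff, Fin.val_succ]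
      rw [h]
      exact M.sub_mem (M.sub_mem (M.sub_mem (M.sub_mem hX2m (M.smul_mem _ he1))
        (M.smul_mem _ he2)) (M.smul_mem _ he3)) (M.smul_mem _ he4)
    constructor
    · rw [eq_top_iff]
      intro v _
      have hv : v = ∑ i : Fin 6, v i • ee i := by
        funext j
        simp [ee, Finset.sum_apply, Pi.single_apply]
      rw [hv]
      refine Submodule.sum_mem _ fun i _ => Submodule.smul_mem _ _ ?_
      fin_cases i
      exacts [he0, he1, he2, he3, he4, he5]
    · rw [eq_bot_iff]
      intro v hv
      obtain ⟨hvD, hvR⟩ := Submodule.mem_inf.mp hv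
      have h05 : v 0 = 0 ∧ v 5 = 0 := by
        have hle : Submodule.span ℝ {R1 p, R2 p, R3 p, R4 p} ≤ K05 :=
          Submodule.span_le.mpr (by rintro x (rfl | rfl | rfl | rfl) <;> exact ⟨rfl, rfl⟩)
        exact hle hvR
      obtain ⟨h1, h2, h3, h4⟩ := mem_D_iff.mp hvD
      have hz : v = 0 := by
        funext j
        fin_cases j <;> simp [h1, h2, h3, h4, h05.1, h05.2]
      rw [hz]; exact Submodule.zero_mem ⊥
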